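/- arXiv:2604.07797 — 4 statements merged into one kernel-verified Lean document; each statement's English description precedes it below -/
import Mathlib

section
/- Let N and γ be natural numbers, let loc : Fin N → ℕ assign a location (Hilbert value) to each object, and let kw : Fin N → Finset K assign a finite keyword set to each object over a keyword type K. Let G be a finite set of pairs (p, j) of natural numbers (a prefix cover of the query range) and let W_q be a finite set of keywords. Define the range R = ⋃_{(p,j) ∈ G} {x : ℕ | p·2^j ≤ x < (p+1)·2^j}, the prefix bitmap B_{(p,j)} = {i : Fin N | loc i / 2^j = p} for each (p, j) ∈ G, and the keyword bitmap B_w = {i : Fin N | w ∈ kw i} for each w ∈ W_q. Then (⋃_{(p,j) ∈ G} B_{(p,j)}) ∩ (⋂_{w ∈ W_q} B_w) = {i : Fin N | loc i ∈ R and W_q ⊆ kw i}; that is, taking the union of the matched prefix bitmaps and intersecting with all matched keyword bitmaps returns exactly the answer set Δ(Q) of the Boolean range query. -/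
/-! A location matches the prefix `(p, j)` exactly when it lies in the dyadic interval
`[p·2^j, (p+1)·2^j)`, so the union of the prefix bitmaps is the preimage of the query range;
and an object lies in every keyword bitmap of `W_q` exactly when its keyword set contains `W_q`. -/

theorem Nat.div_eq_iff_mem_Ico {x p b : ℕ} (hb : 0 < b) :
    x / b = p ↔ x ∈ Set.Ico (p * b) ((p + 1) * b) := by
  rw [Set.mem_Ico, Nat.div_eq_iff hb, Nat.add_one_mul]
  omega

theorem iUnion_prefix_bitmap_eq_preimage {ι : Type*} (loc : ι → ℕ) (G : Set (ℕ × ℕ)) :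
    ⋃ pj ∈ G, {i | loc i / 2 ^ pj.2 = pj.1} =
      loc ⁻¹' ⋃ pj ∈ G, Set.Ico (pj.1 * 2 ^ pj.2) ((pj.1 + 1) * 2 ^ pj.2) := by
  simp only [Set.preimage_iUnion]
  refine Set.iUnion₂_congr fun pj _ => Set.ext fun i => ?_
  exact Nat.div_eq_iff_mem_Ico (Nat.two_pow_pos pj.2)

theorem iInter_keyword_bitmap_eq {ι K : Type*} (kw : ι → Finset K) (W : Finset K) :
    ⋂ w ∈ (W : Set K), {i | w ∈ kw i} = {i | W ⊆ kw i} := by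
  ext i
  simp [Finset.subset_iff]

theorem boolean_range_query_correct_general {K : Type*} (N : ℕ)
    (loc : Fin N → ℕ) (kw : Fin N → Finset K)
    (G : Finset (ℕ × ℕ)) (W_q : Finset K) :
    (⋃ pj ∈ (G : Set (ℕ × ℕ)), {i : Fin N | loc i / 2 ^ pj.2 = pj.1}) ∩
      (⋂ w ∈ (W_q : Set K), {i : Fin N | w ∈ kw i}) =
    {i : Fin N |
      (loc i ∈ ⋃ pj ∈ (G : Set (ℕ × ℕ)),
        Set.Ico (pj.1 * 2 ^ pj.2) ((pj.1 + 1) * 2 ^ pj.2)) ∧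
      W_q ⊆ kw i} := by
  rw [iUnion_prefix_bitmap_eq_preimage, iInter_keyword_bitmap_eq]
  rfl

/-- Correctness of the BRASP search phase: the union of the matched prefix
bitmaps intersected with all matched keyword bitmaps is exactly the answer set
`Δ(Q)` of the Boolean range query `Q = (R, W_q)`. -/
theorem boolean_range_query_correct {K : Type*} (N γ : ℕ)
    (loc : Fin N → ℕ) (kw : Fin N → Finset K)
    (G : Finset (ℕ × ℕ)) (W_q : Finset K) :
    (⋃ pj ∈ (G : Set (ℕ × ℕ)), {i : Fin N | loc i / 2 ^ pj.2 = pj.1}) ∩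
      (⋂ w ∈ (W_q : Set K), {i : Fin N | w ∈ kw i}) =
    {i : Fin N |
      (loc i ∈ ⋃ pj ∈ (G : Set (ℕ × ℕ)),
        Set.Ico (pj.1 * 2 ^ pj.2) ((pj.1 + 1) * 2 ^ pj.2)) ∧
      W_q ⊆ kw i} :=
  boolean_range_query_correct_general N loc kw G W_q
end

section
/- Let G be a group, q a prime number, and g ∈ G an element with g^q = 1. Let k_u, k_M, r₁, r₂ ∈ ZMod q with k_u ≠ 0, let U be a natural number, and define the shuffle map S : G → G by S(s) = (s^(r₂.val))^(r₁.val). Then S iterated U times on the initial index label g^(k_M.val) satisfies S^[U](g^(k_M.val)) = (g^((k_u · (r₁·r₂)^U).val))^((k_M · k_u⁻¹).val). That is, the client trapdoor generated under the shuffle-aware key k_u·(r₁·r₂)^U, after the cloud applies the authorization re-encryption key rk_{u→M} = k_M/k_u, equals the encrypted index label after U shuffle rounds. -/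
/-!
Since `g ^ q = 1`, the map `x ↦ g ^ x.val` turns multiplication in `ZMod q` into iterated
powering. One shuffle round therefore multiplies the exponent by `r₁ * r₂`, so `U` rounds
multiply it by `(r₁ * r₂) ^ U`; on the trapdoor side the exponent is
`k_u * (r₁ * r₂) ^ U * (k_M * k_u⁻¹)`, which is the same element of the field `ZMod q`.
-/

section PowZModVal

variable {M : Type*} [Monoid M] {n : ℕ} {g : M}

theorem pow_val_pow_val (hg : g ^ n = 1) (x y : ZMod n) :
    (g ^ x.val) ^ y.val = g ^ (x * y).val := by
  rw [← pow_mul, pow_eq_pow_mod _ hg, ZMod.val_mul]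

theorem iterate_pow_val_pow_val (hg : g ^ n = 1) (a b x : ZMod n) (k : ℕ) :
    (fun s : M => (s ^ b.val) ^ a.val)^[k] (g ^ x.val) = g ^ (x * (a * b) ^ k).val := by
  have hsemiconj : Function.Semiconj (fun y : ZMod n => g ^ y.val) (· * (a * b))
      (fun s : M => (s ^ b.val) ^ a.val) := fun y => by
    simp only [pow_val_pow_val hg, mul_assoc, mul_comm b a]
  rw [← (hsemiconj.iterate_right k).eq, mul_right_iterate]

end PowZModVal

/-- Shuffle-consistency of BRASP trapdoors: after `U` index-shuffle rounds
(each raising a label `s` to `(s^(r₂))^(r₁)`), the encrypted index label equals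
the client trapdoor generated under the shuffle-aware key `k_u·(r₁·r₂)^U`
re-encrypted by the cloud with the authorization key `rk_{u→M} = k_M/k_u`. -/
theorem tpf_shuffle_trapdoor_consistent {G : Type*} [Group G]
    (q : ℕ) [Fact (Nat.Prime q)] (g : G) (hg : g ^ q = 1)
    (k_u k_M r₁ r₂ : ZMod q) (hku : k_u ≠ 0) (U : ℕ) :
    (fun s : G => (s ^ r₂.val) ^ r₁.val)^[U] (g ^ k_M.val) =
      (g ^ ((k_u * (r₁ * r₂) ^ U).val)) ^ ((k_M * k_u⁻¹).val) := by
  rw [iterate_pow_val_pow_val hg, pow_val_pow_val hg]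
  congr 2
  field_simp
end

section
/- Let p and q be distinct odd primes, let n = p·q, and let λ = lcm(p−1, q−1). Then for every natural number m and every unit r of ZMod (n²), the Paillier ciphertext c = ((n : ZMod (n²)) + 1)^m · (r : ZMod (n²))^n satisfies c^λ = 1 + (m·λ)·(n : ZMod (n²)) in ZMod (n²), where (m·λ)·(n : ZMod (n²)) denotes the cast of the natural number m·λ·n. -/
/-!
Since `n² = 0` in `ZMod (n²)`, the binomial expansion of `(1 + n)^(mλ)` stops after the linear
term. The randomness disappears because the exponent of `(ZMod (n²))ˣ` is the Carmichael number
`λ(p²q²) = lcm(λ(p²), λ(q²))`, which divides `lcm(p(p-1), q(q-1))` and hence `nλ`.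
-/

open ArithmeticFunction

theorem add_one_pow_of_mul_self_eq_zero {R : Type*} [CommSemiring R] {x : R} (hx : x * x = 0)
    (k : ℕ) : (x + 1) ^ k = 1 + k * x := by
  induction k with
  | zero => simp
  | succ k ih =>
    calc (x + 1) ^ (k + 1) = (1 + k * x) * (x + 1) := by rw [pow_succ, ih]
      _ = 1 + (k + 1) * x + k * (x * x) := by ring
      _ = 1 + ((k + 1 : ℕ) : R) * x := by rw [hx]; push_cast; ring

theorem carmichael_prime_sq_dvd {p : ℕ} (hp : p.Prime) : carmichael (p ^ 2) ∣ p * (p - 1) := by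
  have h := carmichael_dvd_totient (p ^ 2)
  rw [Nat.totient_prime_pow hp two_pos] at h
  simpa using h

theorem carmichael_mul_sq_dvd_mul_lcm {p q : ℕ} (hp : p.Prime) (hq : q.Prime) (hpq : p ≠ q) :
    carmichael ((p * q) ^ 2) ∣ p * q * Nat.lcm (p - 1) (q - 1) := by
  have hcop : Nat.Coprime (p ^ 2) (q ^ 2) := ((Nat.coprime_primes hp hq).2 hpq).pow 2 2
  rw [mul_pow, carmichael_mul hcop]
  exact Nat.lcm_dvd
    ((carmichael_prime_sq_dvd hp).trans (mul_dvd_mul (dvd_mul_right p q) (Nat.dvd_lcm_left _ _)))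
    ((carmichael_prime_sq_dvd hq).trans (mul_dvd_mul (dvd_mul_left q p) (Nat.dvd_lcm_right _ _)))

theorem ZMod.unit_pow_eq_one_of_carmichael_dvd {n e : ℕ} (u : (ZMod n)ˣ) (h : carmichael n ∣ e) :
    (u : ZMod n) ^ e = 1 := by
  obtain ⟨k, rfl⟩ := h
  rw [← Units.val_pow_eq_pow_val, pow_mul, pow_carmichael, one_pow, Units.val_one]

theorem paillier_decryption_eq_general (p q : ℕ) (hp : Nat.Prime p) (hq : Nat.Prime q)
    (hpq : p ≠ q)
    (n l : ℕ) (hn : n = p * q) (hl : l = Nat.lcm (p - 1) (q - 1))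
    (m : ℕ) (r : (ZMod (n ^ 2))ˣ) :
    (((n : ZMod (n ^ 2)) + 1) ^ m * ((r : ZMod (n ^ 2)) ^ n)) ^ l =
      1 + ((m * l * n : ℕ) : ZMod (n ^ 2)) := by
  have hr : (r : ZMod (n ^ 2)) ^ (n * l) = 1 :=
    ZMod.unit_pow_eq_one_of_carmichael_dvd r (hn ▸ hl ▸ carmichael_mul_sq_dvd_mul_lcm hp hq hpq)
  have hn_sq : (n : ZMod (n ^ 2)) * n = 0 := by
    rw [← Nat.cast_mul, ← sq, ZMod.natCast_self]
  rw [mul_pow, ← pow_mul, ← pow_mul, hr, mul_one, add_one_pow_of_mul_self_eq_zero hn_sq]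
  push_cast
  ring

/-- Paillier decryption equation: for `n = p·q` a product of two distinct odd
primes and `λ = lcm(p−1, q−1)`, the ciphertext `c = (1+n)^m · r^n` of a
plaintext `m` with randomness a unit `r` satisfies `c^λ = 1 + m·λ·n` in
`ZMod (n²)`. -/
theorem paillier_decryption_eq (p q : ℕ) (hp : Nat.Prime p) (hq : Nat.Prime q)
    (hp2 : Odd p) (hq2 : Odd q) (hpq : p ≠ q)
    (n l : ℕ) (hn : n = p * q) (hl : l = Nat.lcm (p - 1) (q - 1))
    (m : ℕ) (r : (ZMod (n ^ 2))ˣ) :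
    (((n : ZMod (n ^ 2)) + 1) ^ m * ((r : ZMod (n ^ 2)) ^ n)) ^ l =
      1 + ((m * l * n : ℕ) : ZMod (n ^ 2)) :=
  paillier_decryption_eq_general p q hp hq hpq n l hn hl m r
end

section
/- Let p and q be distinct odd primes, let n = p·q, and assume n is coprime to (p−1)·(q−1). Let m₁, m₂ be natural numbers with m₁ < n and m₂ < n, and let r₁, r₂ be units of ZMod (n²). If ((n : ZMod (n²)) + 1)^(m₁) · (r₁ : ZMod (n²))^n = ((n : ZMod (n²)) + 1)^(m₂) · (r₂ : ZMod (n²))^n, then m₁ = m₂. That is, ciphertext sets of distinct Paillier plaintexts in {0, …, n−1} are disjoint, so decryption is well-defined. -/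
lemma one_add_n_pow (n k : ℕ) : ((n : ZMod (n ^ 2)) + 1) ^ k = (k * n : ℕ) + 1 := by
  have hnn : (n : ZMod (n ^ 2)) * n = 0 := by
    have : ((n ^ 2 : ℕ) : ZMod (n ^ 2)) = 0 := ZMod.natCast_self _
    push_cast at this
    linear_combination this
  induction k with
  | zero => simp
  | succ k ih =>
    have : ((n : ZMod (n ^ 2)) + 1) ^ (k + 1) = ((n : ZMod (n ^ 2)) + 1) ^ k * ((n : ZMod (n ^ 2)) + 1) := pow_succ _ _
    rw [this, ih]
    push_cast
    ring_nf
    linear_combination (k : ZMod (n ^ 2)) * hnn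

/-- Plaintext injectivity of Paillier encryption: under the standard key
generation condition `gcd(n, (p−1)(q−1)) = 1` with `n = p·q` a product of two
distinct odd primes, ciphertexts of distinct plaintexts in `{0, …, n−1}` are
distinct, so decryption is well-defined. -/
theorem paillier_plaintext_injective (p q : ℕ) (hp : Nat.Prime p)
    (hq : Nat.Prime q) (hp2 : Odd p) (hq2 : Odd q) (hpq : p ≠ q)
    (n : ℕ) (hn : n = p * q) (hcop : Nat.Coprime n ((p - 1) * (q - 1)))
    (m₁ m₂ : ℕ) (hm₁ : m₁ < n) (hm₂ : m₂ < n)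
    (r₁ r₂ : (ZMod (n ^ 2))ˣ)
    (heq : ((n : ZMod (n ^ 2)) + 1) ^ m₁ * ((r₁ : ZMod (n ^ 2)) ^ n) =
      ((n : ZMod (n ^ 2)) + 1) ^ m₂ * ((r₂ : ZMod (n ^ 2)) ^ n)) :
    m₁ = m₂ := by
  set L := (p - 1) * (q - 1) with hL
  have hn0 : n ≠ 0 := by
    rw [hn]; exact Nat.mul_ne_zero hp.pos.ne' hq.pos.ne'
  have hNZ : NeZero (n ^ 2) := ⟨pow_ne_zero _ hn0⟩
  have htot : Nat.totient (n ^ 2) = n * L := by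
    have hppq : Nat.Coprime (p ^ 2) (q ^ 2) :=
      Nat.Coprime.pow 2 2 ((Nat.coprime_primes hp hq).2 hpq)
    have h1 : n ^ 2 = p ^ 2 * q ^ 2 := by rw [hn]; ring
    rw [h1, Nat.totient_mul hppq, Nat.totient_prime_pow hp (by norm_num),
      Nat.totient_prime_pow hq (by norm_num)]
    rw [hn, hL]; ring
  have heuler : ∀ r : (ZMod (n ^ 2))ˣ, r ^ (n * L) = 1 := by
    intro r
    rw [← htot, ← ZMod.card_units_eq_totient]
    exact pow_card_eq_one
  have h2 : ((n : ZMod (n ^ 2)) + 1) ^ (m₁ * L) = ((n : ZMod (n ^ 2)) + 1) ^ (m₂ * L) := by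
    have h := congrArg (· ^ L) heq
    simp only [mul_pow, ← pow_mul] at h
    have e1 : ((r₁ : ZMod (n ^ 2)) ^ (n * L)) = 1 := by
      rw [← Units.val_pow_eq_pow_val, heuler r₁, Units.val_one]
    have e2 : ((r₂ : ZMod (n ^ 2)) ^ (n * L)) = 1 := by
      rw [← Units.val_pow_eq_pow_val, heuler r₂, Units.val_one]
    rwa [e1, e2, mul_one, mul_one] at h
  rw [one_add_n_pow, one_add_n_pow] at h2
  have h3 : ((m₁ * L * n : ℕ) : ZMod (n ^ 2)) = ((m₂ * L * n : ℕ) : ZMod (n ^ 2)) := by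
    linear_combination h2
  have h4 : m₁ * L * n ≡ m₂ * L * n [MOD n ^ 2] := (ZMod.natCast_eq_natCast_iff _ _ _).1 h3
  have h5 : m₁ * L ≡ m₂ * L [MOD n] := by
    rw [Nat.modEq_iff_dvd] at h4 ⊢
    have hdvd : (n : ℤ) * n ∣ ((m₂ * L : ℤ) - (m₁ * L : ℤ)) * n := by
      push_cast at h4 ⊢
      convert h4 using 1
      · push_cast; ring
      · ring
    exact (mul_dvd_mul_iff_right (by exact_mod_cast hn0 : (n : ℤ) ≠ 0)).1 hdvd
  have h6 : m₁ ≡ m₂ [MOD n] := Nat.ModEq.cancel_right_of_coprime hcop h5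
  have := h6  -- m₁ % n = m₂ % n
  rwa [Nat.ModEq, Nat.mod_eq_of_lt hm₁, Nat.mod_eq_of_lt hm₂] at this
end
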